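/- Let (μ_λ)_{λ∈Λ} be a measurable family of Borel regular outer measures on ℝ^n. For every Borel A ⊂ ℝ^n × Λ and every Borel B ⊂ ℝ^n: (1) 𝓘̂_m(A) = 0 if and only if μ_λ(A_λ) = 0 for L^l-a.e. λ ∈ Λ, where A_λ := {x ∈ ℝ^n : (x,λ) ∈ A}; (2) 𝓘^m_1(B) = 0 if and only if μ_λ(B) = 0 for L^l-a.e. λ ∈ Λ; (3) for every p ∈ [1,∞], 𝓘^m_1(B) = 0 if and only if 𝓘^m_p(B) = 0. -/

import Mathlib

open MeasureTheory Metric Set Filter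
open scoped ENNReal NNReal Topology

noncomputable section

abbrev Euc (n : ℕ) : Type := EuclideanSpace ℝ (Fin n)

namespace Slicing

variable {n m l : ℕ}

/-- The map `T_{x x'}(λ) = (P_λ(x) - P_λ(x'))/|x - x'|`. -/
def transMap (P : Euc n → Euc l → Euc m) (x x' : Euc n) (lam : Euc l) : Euc m :=
  ‖x - x'‖⁻¹ • (P x lam - P x' lam)

/-- The `m`-dimensional Jacobian `J D = √det(D ∘ Dᵀ)` of a linear map `D : ℝˡ → ℝᵐ`. -/
def jacobian (D : Euc l →L[ℝ] Euc m) : ℝ :=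
  Real.sqrt (LinearMap.det
    ((D.comp (ContinuousLinearMap.adjoint D) : Euc m →L[ℝ] Euc m) : Euc m →ₗ[ℝ] Euc m))

/-- A transversal family of maps `(P_λ)_{λ ∈ Λ}` in the sense of Definition 3.4. -/
structure IsTransversalFamily (Λ : Set (Euc l)) (P : Euc n → Euc l → Euc m) : Prop where
  isOpen : IsOpen Λ
  isBounded : Bornology.IsBounded Λ
  continuousOn : ContinuousOn (fun q : Euc n × Euc l => P q.1 q.2) (Set.univ ×ˢ Λ)
  contDiffOn : ∀ x : Euc n, ContDiffOn ℝ 2 (P x) Λ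
  derivBound : ∀ j : ℕ, j = 1 ∨ j = 2 → ∃ C : ℝ, ∀ x : Euc n, ∀ lam ∈ Λ,
    ‖iteratedFDeriv ℝ j (P x) lam‖ ≤ C
  transversality : ∃ C' : ℝ, 0 < C' ∧ ∀ x x' : Euc n, x ≠ x' → ∀ lam ∈ Λ,
    ‖transMap P x x' lam‖ ≤ C' → C' ≤ jacobian (fderiv ℝ (transMap P x x') lam)
  transDerivBound : ∃ C'' : ℝ, ∀ x x' : Euc n, x ≠ x' → ∀ lam ∈ Λ,
    ‖fderiv ℝ (transMap P x x') lam‖ ≤ C'' ∧ ‖iteratedFDeriv ℝ 2 (transMap P x x') lam‖ ≤ C''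

/-- The cone `X(a,λ,s)`. -/
def coneX (P : Euc n → Euc l → Euc m) (a : Euc n) (lam : Euc l) (s : ℝ) : Set (Euc n) :=
  {x | ‖P x lam - P a lam‖ < s * ‖x - a‖}

/-- The truncated cone `X(a,r,λ,s)`. -/
def coneXr (P : Euc n → Euc l → Euc m) (a : Euc n) (r : ℝ) (lam : Euc l) (s : ℝ) :
    Set (Euc n) :=
  coneX P a lam s ∩ closedBall a r

/-- The cone `L_V(a,λ,s)`. -/
def coneL (P : Euc n → Euc l → Euc m) (V : Submodule ℝ (Euc l)) (a : Euc n) (lam : Euc l)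
    (s : ℝ) : Set (Euc n) :=
  {x | ∃ lam' : Euc l, P x lam' = P a lam' ∧ ‖lam' - lam‖ < s ∧ lam' - lam ∈ V}

/-- `V` is an `m`-dimensional coordinate plane of `ℝˡ`. -/
def IsCoordPlane (m : ℕ) (V : Submodule ℝ (Euc l)) : Prop :=
  ∃ I : Finset (Fin l), I.card = m ∧
    V = Submodule.span ℝ {v : Euc l | ∃ i ∈ I, v = EuclideanSpace.single i (1 : ℝ)}

/-- A countably `m`-rectifiable subset of `ℝⁿ`. -/
def CountablyRectifiable (m : ℕ) (R : Set (Euc n)) : Prop :=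
  ∃ (E : ℕ → Set (Euc m)) (f : ℕ → Euc m → Euc n),
    (∀ i, Bornology.IsBounded (E i)) ∧
    (∀ i, ∃ K : ℝ≥0, LipschitzOnWith K (f i) (E i)) ∧
    R = ⋃ i, f i '' E i

/-- An `m`-rectifiable measure: `μ = θ · (H^m ⌊ R)`. -/
def IsRectifiableMeasure (m : ℕ) (μ : Measure (Euc n)) : Prop :=
  ∃ (R : Set (Euc n)) (θ : Euc n → ℝ), CountablyRectifiable m R ∧ Measurable θ ∧
    μ = (μH[(m : ℝ)].restrict R).withDensity (fun x => ENNReal.ofReal (θ x))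

/-- `S` is an `m`-dimensional `C¹` submanifold of `ℝⁿ`. -/
def IsC1Submanifold (m : ℕ) (S : Set (Euc n)) : Prop :=
  ∀ x ∈ S, ∃ (U : Set (Euc n)) (V : Set (Euc m)) (f : Euc m → Euc n),
    IsOpen U ∧ x ∈ U ∧ IsOpen V ∧ ContDiffOn ℝ 1 f V ∧ Set.InjOn f V ∧
    (∀ y ∈ V, Function.Injective (fderivWithin ℝ f V y)) ∧ S ∩ U = f '' V

/-- `E` is purely `(φ,m)`-unrectifiable. -/
def PurelyUnrectifiable (m : ℕ) (φ : Measure (Euc n)) (E : Set (Euc n)) : Prop :=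
  ∀ S : Set (Euc n), IsC1Submanifold m S → φ (S ∩ E) = 0

/-- `A` is countably `(φ,m)`-rectifiable. -/
def CountablyRectifiableWrt (m : ℕ) (φ : Measure (Euc n)) (A : Set (Euc n)) : Prop :=
  ∃ R : Set (Euc n), CountablyRectifiable m R ∧ φ (A \ R) = 0

/-- Carathéodory's construction from a set function `ζ`, using countable Borel coverings. -/
def carath {X : Type*} [EMetricSpace X] [MeasurableSpace X] (ζ : Set X → ℝ≥0∞) (E : Set X) :
    ℝ≥0∞ :=
  ⨆ (δ : ℝ≥0∞) (_ : 0 < δ), ⨅ (G : ℕ → Set X) (_ : ∀ i, MeasurableSet (G i))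
    (_ : E ⊆ ⋃ i, G i) (_ : ∀ i, EMetric.diam (G i) ≤ δ), ∑' i, ζ (G i)

/-- `L^p` norm of an `ℝ≥0∞`-valued function. -/
def lpNormENN {α : Type*} [MeasurableSpace α] (ν : Measure α) (p : ℝ≥0∞) (f : α → ℝ≥0∞) :
    ℝ≥0∞ :=
  if p = ∞ then essSup f ν else (∫⁻ a, f a ^ p.toReal ∂ν) ^ (1 / p.toReal)

/-- The set function `ζ_p(B) = ‖λ ↦ μ_λ(B)‖_{L^p(Λ)}`. -/
def zetaP (Λ : Set (Euc l)) (μ : Euc l → Measure (Euc n)) (p : ℝ≥0∞) (B : Set (Euc n)) :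
    ℝ≥0∞ :=
  lpNormENN (volume.restrict Λ) p (fun lam => μ lam B)

/-- The measure `𝓘^m_p` obtained from `ζ_p` via Carathéodory's construction. -/
def genIGMeasure (Λ : Set (Euc l)) (μ : Euc l → Measure (Euc n)) (p : ℝ≥0∞) :
    Set (Euc n) → ℝ≥0∞ :=
  carath (zetaP Λ μ p)

/-- Upper Lebesgue integral. -/
def upperLintegral {α : Type*} [MeasurableSpace α] (ν : Measure α) (f : α → ℝ≥0∞) : ℝ≥0∞ :=
  ⨅ (g : α → ℝ≥0∞) (_ : Measurable g) (_ : ∀ a, f a ≤ g a), ∫⁻ a, g a ∂ν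

/-- The set function `ζ̂(B') = ∫*_Λ μ_λ(B'_λ) dλ`. -/
def zetaHat (Λ : Set (Euc l)) (μ : Euc l → Measure (Euc n)) (B' : Set (Euc n × Euc l)) :
    ℝ≥0∞ :=
  upperLintegral (volume.restrict Λ) (fun lam => μ lam {x | (x, lam) ∈ B'})

/-- The measure `𝓘̂_m` on the product, obtained from `ζ̂` via Carathéodory's construction. -/
def hatIG (Λ : Set (Euc l)) (μ : Euc l → Measure (Euc n)) : Set (Euc n × Euc l) → ℝ≥0∞ :=
  carath (zetaHat Λ μ)

/-- A measurable family of (Borel regular outer) measures. -/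
def MeasurableFamily (Λ : Set (Euc l)) (μ : Euc l → Measure (Euc n)) : Prop :=
  ∀ B : Set (Euc n), MeasurableSet B → AEMeasurable (fun lam => μ lam B) (volume.restrict Λ)

/-- `𝓘^m_p` is an integralgeometric measure (Definition 4.1). -/
def IsIntegralgeometric (Λ : Set (Euc l)) (P : Euc n → Euc l → Euc m)
    (μ : Euc l → Measure (Euc n)) : Prop :=
  (∀ᵐ lam ∂(volume.restrict Λ), (μ lam).map (fun x => P x lam) ≪ volume) ∧
  ∃ E : Set (Euc n), MeasurableSet E ∧
    (∀ᵐ lam ∂(volume.restrict Λ), μ lam Eᶜ = 0) ∧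
    (∀ᵐ lam ∂(volume.restrict Λ), ∀ᵐ y ∂((μ lam).map (fun x => P x lam)),
      (E ∩ (fun x => P x lam) ⁻¹' {y}).Finite)

/-- A disintegration `ν = η_y ⊗ Q_♯ν`. -/
def IsDisintegration {X Y : Type*} [MeasurableSpace X] [MeasurableSpace Y] (ν : Measure X)
    (Q : X → Y) (η : Y → Measure X) : Prop :=
  (∀ y, IsProbabilityMeasure (η y)) ∧
  (∀ᵐ y ∂(ν.map Q), η y (Q ⁻¹' {y})ᶜ = 0) ∧
  (∀ B : Set X, MeasurableSet B → Measurable fun y => η y B) ∧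
  (∀ B : Set X, MeasurableSet B → ν B = ∫⁻ y, η y B ∂(ν.map Q))

/-- A `0`-rectifiable measure (a countable sum of nonnegative point masses). -/
def ZeroRectifiable {X : Type*} [MeasurableSpace X] (ν : Measure X) : Prop :=
  ∃ R : Set X, R.Countable ∧ ν Rᶜ = 0

/-- A measure supported on a finite set. -/
def FinitelySupported {X : Type*} [MeasurableSpace X] (ν : Measure X) : Prop :=
  ∃ F : Set X, F.Finite ∧ ν Fᶜ = 0

/-- `ω(m)`, the Lebesgue measure of the unit ball of `ℝᵐ`. -/
def omegaBall (m : ℕ) : ℝ := (volume (Metric.ball (0 : Euc m) 1)).toReal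

/-- The `m`-dimensional upper density `Θ^{*m}(ν, a)`. -/
def upperDensity (m : ℕ) (ν : Measure (Euc n)) (a : Euc n) : ℝ≥0∞ :=
  Filter.limsup
    (fun r : ℝ => ν (closedBall a r) / ENNReal.ofReal (omegaBall m * r ^ m)) (𝓝[>] 0)

/-- `sup_{0<r<δ} (rs)^{-m} φ(E ∩ X(a,r,λ,s))`, then `limsup` as `s → 0⁺`. -/
def coneDensity (P : Euc n → Euc l → Euc m) (φ : Measure (Euc n)) (E : Set (Euc n))
    (a : Euc n) (lam : Euc l) (δ : ℝ) : ℝ≥0∞ :=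
  Filter.limsup (fun s : ℝ =>
    ⨆ (r : ℝ) (_ : r ∈ Set.Ioo (0 : ℝ) δ),
      φ (E ∩ coneXr P a r lam s) / ENNReal.ofReal ((r * s) ^ m)) (𝓝[>] 0)



/-- The Grassmannian of `m`-dimensional linear subspaces of `ℝⁿ`. -/
def Grassmannian (n m : ℕ) : Type :=
  {V : Submodule ℝ (Euc n) // Module.finrank ℝ V = m}

/-- The orthogonal projection `π_V : ℝⁿ → V ⊆ ℝⁿ`. -/
def projG {n m : ℕ} (V : Grassmannian n m) : Euc n →L[ℝ] Euc n :=
  (V.1.subtypeL).comp (V.1.orthogonalProjectionOnto)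

instance {n m : ℕ} : TopologicalSpace (Grassmannian n m) :=
  TopologicalSpace.induced projG inferInstance

instance {n m : ℕ} : MeasurableSpace (Grassmannian n m) := borel _

instance {n m : ℕ} : BorelSpace (Grassmannian n m) := ⟨rfl⟩

/-- The action of an orthogonal transformation on the Grassmannian. -/
def grMap {n m : ℕ} (g : Euc n ≃ₗᵢ[ℝ] Euc n) (V : Grassmannian n m) : Grassmannian n m :=
  ⟨V.1.map (g.toLinearEquiv : Euc n →ₗ[ℝ] Euc n), by
    rw [LinearEquiv.finrank_map_eq g.toLinearEquiv V.1]; exact V.2⟩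

/-- A measure on the Grassmannian is invariant under the action of `O(n)`. -/
def IsONInvariant {n m : ℕ} (γ : Measure (Grassmannian n m)) : Prop :=
  ∀ g : Euc n ≃ₗᵢ[ℝ] Euc n, Measure.map (grMap g) γ = γ

/-- `η_p(B) = ‖V ↦ H^m(π_V(B))‖_{L^p(γ)}`. -/
def etaP {n m : ℕ} (γ : Measure (Grassmannian n m)) (p : ℝ≥0∞) (B : Set (Euc n)) : ℝ≥0∞ :=
  lpNormENN γ p (fun V => μH[(m : ℝ)] (projG V '' B))

/-- Federer's integralgeometric measure `I^m_p`. -/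
def IGMeasure {n m : ℕ} (γ : Measure (Grassmannian n m)) (p : ℝ≥0∞) :
    Set (Euc n) → ℝ≥0∞ :=
  carath (etaP γ p)

/-- `μ_V(B) = ∫_V H^0(B ∩ π_V⁻¹(y)) dH^m(y)`. -/
def muV {n m : ℕ} (V : Grassmannian n m) (B : Set (Euc n)) : ℝ≥0∞ :=
  ∫⁻ y in (V.1 : Set (Euc n)), Measure.count (B ∩ projG V ⁻¹' {y}) ∂μH[(m : ℝ)]



/-- `ζ_p(B) = ‖V ↦ μ_V(B)‖_{L^p(γ)}` for the measures `μ_V`. -/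
def zetaGr {n m : ℕ} (γ : Measure (Grassmannian n m)) (p : ℝ≥0∞) (B : Set (Euc n)) : ℝ≥0∞ :=
  lpNormENN γ p (fun V => muV V B)

/-- The measure `𝓘^m_p` obtained from `ζ_p` via Carathéodory's construction. -/
def IGMeasureAlt {n m : ℕ} (γ : Measure (Grassmannian n m)) (p : ℝ≥0∞) :
    Set (Euc n) → ℝ≥0∞ :=
  carath (zetaGr γ p)


/-!
A Carathéodory measure built from `ζ` vanishes on a Borel set `E` as soon as `ζ` vanishes on
every Borel subset of `E` (cover `E` by its pieces in small balls); conversely, every quantity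
bounded by all the covering sums of `E` vanishes when the Carathéodory measure does. For `ζ̂`
and `ζ₁` that quantity is the (upper) integral of `λ ↦ μ_λ(E_λ)`, which is countably
subadditive and vanishes exactly when its integrand vanishes a.e. This gives (1) and (2). For
(3), `ζ_p(B) = 0` as soon as `μ_λ(B) = 0` a.e., and Hölder's inequality on the bounded set `Λ`
bounds `ζ₁` by a constant multiple of `ζ_p`.
-/

section UpperLintegral

variable {α : Type*} [MeasurableSpace α] {ν : Measure α}

lemma upperLintegral_le_lintegral {f g : α → ℝ≥0∞} (hg : Measurable g) (hfg : f ≤ g) :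
    upperLintegral ν f ≤ ∫⁻ a, g a ∂ν :=
  iInf₂_le_of_le g hg (iInf_le _ hfg)

lemma exists_measurable_ge_lintegral_lt {f : α → ℝ≥0∞} {c : ℝ≥0∞}
    (h : upperLintegral ν f < c) : ∃ g, Measurable g ∧ f ≤ g ∧ ∫⁻ a, g a ∂ν < c := by
  simpa only [upperLintegral, iInf_lt_iff, exists_prop, Pi.le_def] using h

/-- Take the pointwise infimum of a minimizing sequence. -/
lemma exists_measurable_ge_lintegral_eq_upperLintegral (f : α → ℝ≥0∞) :
    ∃ g, Measurable g ∧ f ≤ g ∧ ∫⁻ a, g a ∂ν = upperLintegral ν f := by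
  rcases eq_top_or_lt_top (upperLintegral ν f) with htop | hfin
  · refine ⟨fun _ => ∞, measurable_const, fun _ => le_top, ?_⟩
    exact le_antisymm (by rw [htop]; exact le_top)
      (upperLintegral_le_lintegral measurable_const fun _ => le_top)
  have hseq : ∀ k : ℕ, ∃ g, Measurable g ∧ f ≤ g ∧
      ∫⁻ a, g a ∂ν < upperLintegral ν f + (k : ℝ≥0∞)⁻¹ := fun k =>
    exists_measurable_ge_lintegral_lt (ENNReal.lt_add_right hfin.ne (by simp))
  choose g hg hfg hint using hseq
  refine ⟨fun a => ⨅ k, g k a, .iInf hg, fun a => le_iInf fun k => hfg k a, ?_⟩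
  refine le_antisymm (ENNReal.le_of_forall_pos_le_add fun ε hε _ => ?_)
    (upperLintegral_le_lintegral (.iInf hg) fun a => le_iInf fun k => hfg k a)
  obtain ⟨k, hk⟩ := ENNReal.exists_inv_nat_lt (a := ε) (by exact_mod_cast hε.ne')
  calc ∫⁻ a, ⨅ k, g k a ∂ν ≤ ∫⁻ a, g k a ∂ν := lintegral_mono fun a => iInf_le _ k
    _ ≤ upperLintegral ν f + ε := (hint k).le.trans (add_le_add_right hk.le _)

lemma upperLintegral_mono {f g : α → ℝ≥0∞} (hfg : f ≤ g) :
    upperLintegral ν f ≤ upperLintegral ν g := by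
  obtain ⟨g', hg', hgg', hint⟩ := exists_measurable_ge_lintegral_eq_upperLintegral (ν := ν) g
  exact hint ▸ upperLintegral_le_lintegral hg' (hfg.trans hgg')

lemma upperLintegral_tsum_le (f : ℕ → α → ℝ≥0∞) :
    upperLintegral ν (fun a => ∑' i, f i a) ≤ ∑' i, upperLintegral ν (f i) := by
  choose g hg hfg hint using fun i =>
    exists_measurable_ge_lintegral_eq_upperLintegral (ν := ν) (f i)
  calc upperLintegral ν (fun a => ∑' i, f i a) ≤ ∫⁻ a, ∑' i, g i a ∂ν :=
        upperLintegral_le_lintegral (.tsum hg) fun a => ENNReal.tsum_le_tsum fun i => hfg i a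
    _ = ∑' i, upperLintegral ν (f i) := by
        rw [lintegral_tsum fun i => (hg i).aemeasurable]; exact tsum_congr hint

lemma upperLintegral_eq_zero_iff {f : α → ℝ≥0∞} : upperLintegral ν f = 0 ↔ f =ᵐ[ν] 0 := by
  constructor
  · intro h
    obtain ⟨g, hg, hfg, hint⟩ := exists_measurable_ge_lintegral_eq_upperLintegral (ν := ν) f
    filter_upwards [(lintegral_eq_zero_iff hg).1 (hint.trans h)] with a ha
    exact le_antisymm ((hfg a).trans ha.le) zero_le
  · intro h
    set N := toMeasurable ν {a | f a ≠ 0}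
    have hfN : f ≤ N.indicator fun _ => ∞ := fun a => by
      by_cases ha : f a = 0
      · simp [ha]
      · rw [indicator_of_mem (subset_toMeasurable ν {a | f a ≠ 0} ha : a ∈ N)]; exact le_top
    have hN : ν N = 0 := by rw [measure_toMeasurable]; exact ae_iff.1 h
    refine le_antisymm ?_ zero_le
    calc upperLintegral ν f ≤ ∫⁻ a, N.indicator (fun _ => ∞) a ∂ν :=
          upperLintegral_le_lintegral
            (measurable_const.indicator (measurableSet_toMeasurable ..)) hfN
      _ = 0 := by
          rw [lintegral_indicator_const (measurableSet_toMeasurable ..), hN, mul_zero]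

end UpperLintegral

section Carath

variable {X : Type*} [EMetricSpace X] [MeasurableSpace X] {ζ ζ' : Set X → ℝ≥0∞} {E : Set X}

lemma carath_eq_zero_iff : carath ζ E = 0 ↔ ∀ δ : ℝ≥0∞, 0 < δ → ∀ ε : ℝ≥0∞, 0 < ε →
    ∃ G : ℕ → Set X, (∀ i, MeasurableSet (G i)) ∧ E ⊆ ⋃ i, G i ∧
      (∀ i, ediam (G i) ≤ δ) ∧ ∑' i, ζ (G i) < ε := by
  simp only [carath, ← bot_eq_zero, iSup_eq_bot, iInf_eq_bot, iInf_lt_iff, exists_prop,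
    bot_lt_iff_ne_bot]
  rfl

lemma eq_zero_of_le_covering_sums {c : ℝ≥0∞} (h : carath ζ E = 0)
    (hc : ∀ G : ℕ → Set X, (∀ i, MeasurableSet (G i)) → E ⊆ ⋃ i, G i → c ≤ ∑' i, ζ (G i)) :
    c = 0 := by
  refine le_antisymm (ENNReal.le_of_forall_pos_le_add fun ε hε _ => ?_) zero_le
  obtain ⟨G, hGm, hEG, -, hG⟩ := carath_eq_zero_iff.1 h 1 one_pos ε (by exact_mod_cast hε)
  simpa using (hc G hGm hEG).trans hG.le

lemma carath_eq_zero_of_le_const_mul {C : ℝ≥0∞} (hC : C ≠ ∞)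
    (hζ : ∀ B, MeasurableSet B → ζ B ≤ C * ζ' B) (h : carath ζ' E = 0) : carath ζ E = 0 := by
  refine carath_eq_zero_iff.2 fun δ hδ ε hε => ?_
  obtain ⟨G, hGm, hEG, hGδ, hG⟩ :=
    carath_eq_zero_iff.1 h δ hδ (ε / C) (ENNReal.div_pos hε.ne' hC)
  refine ⟨G, hGm, hEG, hGδ, ?_⟩
  calc ∑' i, ζ (G i) ≤ ∑' i, C * ζ' (G i) := ENNReal.tsum_le_tsum fun i => hζ _ (hGm i)
    _ = C * ∑' i, ζ' (G i) := ENNReal.tsum_mul_left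
    _ < ε := ENNReal.mul_lt_of_lt_div' hG

/-- Cover `E` by its intersections with small balls centred at a dense sequence. -/
lemma carath_eq_zero_of_forall_subset [OpensMeasurableSpace X] [TopologicalSpace.SeparableSpace X]
    (hE : MeasurableSet E) (hζ : ∀ B, MeasurableSet B → B ⊆ E → ζ B = 0) : carath ζ E = 0 := by
  refine carath_eq_zero_iff.2 fun δ hδ ε hε => ?_
  rcases isEmpty_or_nonempty X with hX | hX
  · refine ⟨fun _ => ∅, fun _ => .empty, fun x _ => isEmptyElim x, fun _ => by simp, ?_⟩
    simpa [hζ ∅ .empty (empty_subset _)] using hε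
  obtain ⟨u, hu⟩ := TopologicalSpace.exists_dense_seq X
  have hr : 0 < δ / 2 := ENNReal.div_pos hδ.ne' ENNReal.ofNat_ne_top
  have hG : ∀ i, MeasurableSet (E ∩ eball (u i) (δ / 2)) :=
    fun i => hE.inter isOpen_eball.measurableSet
  refine ⟨fun i => E ∩ eball (u i) (δ / 2), hG, fun x hx => ?_, fun i => ?_, ?_⟩
  · obtain ⟨i, hi⟩ := hu.exists_mem_open isOpen_eball ⟨x, mem_eball_self hr⟩
    exact mem_iUnion.2 ⟨i, hx, mem_eball_comm.1 hi⟩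
  · calc ediam (E ∩ eball (u i) (δ / 2)) ≤ 2 * (δ / 2) :=
          (ediam_mono inter_subset_right).trans ediam_eball_le
      _ = δ := ENNReal.mul_div_cancel two_ne_zero ENNReal.ofNat_ne_top
  · simpa [hζ _ (hG _) inter_subset_left] using hε

end Carath

section LpNorm

variable {α : Type*} [MeasurableSpace α] {ν : Measure α} {p : ℝ≥0∞}

lemma lpNormENN_eq_eLpNorm (hp : p ≠ 0) (f : α → ℝ≥0∞) : lpNormENN ν p f = eLpNorm f p ν := by
  rcases eq_or_ne p ∞ with rfl | hp_top
  · simp [lpNormENN, eLpNorm, eLpNormEssSup]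
  · simp [lpNormENN, eLpNorm, eLpNorm', hp, hp_top]

lemma lpNormENN_one (f : α → ℝ≥0∞) : lpNormENN ν 1 f = ∫⁻ a, f a ∂ν := by
  simp [lpNormENN]

lemma lintegral_le_lpNormENN_mul_measure_univ_rpow (hp : 1 ≤ p) {f : α → ℝ≥0∞}
    (hf : AEMeasurable f ν) :
    ∫⁻ a, f a ∂ν ≤ lpNormENN ν p f * ν univ ^ (1 - 1 / p.toReal) := by
  rw [← lpNormENN_one, lpNormENN_eq_eLpNorm one_ne_zero,
    lpNormENN_eq_eLpNorm (zero_lt_one.trans_le hp).ne']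
  simpa using eLpNorm_le_eLpNorm_mul_rpow_measure_univ hp hf.aestronglyMeasurable

end LpNorm

section NullSets

variable {Λ : Set (Euc l)} {μ : Euc l → Measure (Euc n)}

lemma hatIG_eq_zero_iff {A : Set (Euc n × Euc l)} (hA : MeasurableSet A) :
    hatIG Λ μ A = 0 ↔ ∀ᵐ lam ∂(volume.restrict Λ), μ lam {x | (x, lam) ∈ A} = 0 := by
  refine ⟨fun h => upperLintegral_eq_zero_iff.1 (eq_zero_of_le_covering_sums h fun G _ hAG => ?_),
    fun h => carath_eq_zero_of_forall_subset hA fun B _ hBA => upperLintegral_eq_zero_iff.2 ?_⟩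
  · have hslice : ∀ lam, μ lam {x | (x, lam) ∈ A} ≤ ∑' i, μ lam {x | (x, lam) ∈ G i} := fun lam =>
      (measure_mono (preimage_mono hAG)).trans (by rw [preimage_iUnion]; exact measure_iUnion_le _)
    exact (upperLintegral_mono hslice).trans (upperLintegral_tsum_le _)
  · exact h.mono fun lam hlam => measure_mono_null (fun x hx => hBA hx) hlam

lemma genIGMeasure_eq_zero_of_ae {p : ℝ≥0∞} (hp : p ≠ 0) {B : Set (Euc n)} (hB : MeasurableSet B)
    (h : ∀ᵐ lam ∂(volume.restrict Λ), μ lam B = 0) : genIGMeasure Λ μ p B = 0 :=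
  carath_eq_zero_of_forall_subset hB fun _ _ hB' => by
    rw [zetaP, lpNormENN_eq_eLpNorm hp]
    exact eLpNorm_eq_zero_of_ae_zero (h.mono fun lam hlam => measure_mono_null hB' hlam)

lemma genIGMeasure_one_eq_zero_iff (hμ : MeasurableFamily Λ μ) {B : Set (Euc n)}
    (hB : MeasurableSet B) :
    genIGMeasure Λ μ 1 B = 0 ↔ ∀ᵐ lam ∂(volume.restrict Λ), μ lam B = 0 := by
  refine ⟨fun h => (lintegral_eq_zero_iff' (hμ B hB)).1
    (eq_zero_of_le_covering_sums h fun G hG hBG => ?_), genIGMeasure_eq_zero_of_ae one_ne_zero hB⟩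
  calc ∫⁻ lam in Λ, μ lam B ≤ ∫⁻ lam in Λ, ∑' i, μ lam (G i) :=
        lintegral_mono fun lam => (measure_mono hBG).trans (measure_iUnion_le _)
    _ = ∑' i, zetaP Λ μ 1 (G i) := by
        simp only [zetaP, lpNormENN_one]; exact lintegral_tsum fun i => hμ _ (hG i)

/-- By Hölder's inequality, `ζ₁ ≤ L^l(Λ)^(1 - 1/p) ζ_p`. -/
lemma genIGMeasure_one_eq_zero_of_genIGMeasure_eq_zero (hΛ : volume Λ ≠ ∞)
    (hμ : MeasurableFamily Λ μ) {p : ℝ≥0∞} (hp : 1 ≤ p) {B : Set (Euc n)}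
    (h : genIGMeasure Λ μ p B = 0) : genIGMeasure Λ μ 1 B = 0 := by
  have hexp : 1 / p.toReal ≤ 1 := by
    rcases eq_or_ne p ∞ with rfl | hp_top
    · simp
    · exact div_le_one_of_le₀ (by simpa using ENNReal.toReal_mono hp_top hp) (by positivity)
  refine carath_eq_zero_of_le_const_mul (ENNReal.rpow_ne_top_of_nonneg (sub_nonneg.2 hexp) hΛ)
    (fun B' hB' => ?_) h
  rw [zetaP, lpNormENN_one, mul_comm, ← Measure.restrict_apply_univ]
  exact lintegral_le_lpNormENN_mul_measure_univ_rpow hp (hμ B' hB')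

end NullSets

theorem genIGMeasure_null_iff_general
    {n l : ℕ}
    (Λ : Set (Euc l)) (hΛb : Bornology.IsBounded Λ)
    (μ : Euc l → Measure (Euc n)) (hμ : MeasurableFamily Λ μ) :
    (∀ A : Set (Euc n × Euc l), MeasurableSet A → A ⊆ Set.univ ×ˢ Λ →
      (hatIG Λ μ A = 0 ↔
        ∀ᵐ lam ∂(volume.restrict Λ), μ lam {x | (x, lam) ∈ A} = 0)) ∧
    (∀ B : Set (Euc n), MeasurableSet B →
      (genIGMeasure Λ μ 1 B = 0 ↔ ∀ᵐ lam ∂(volume.restrict Λ), μ lam B = 0)) ∧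
    (∀ p : ℝ≥0∞, 1 ≤ p → ∀ B : Set (Euc n), MeasurableSet B →
      (genIGMeasure Λ μ 1 B = 0 ↔ genIGMeasure Λ μ p B = 0)) := by
  refine ⟨fun A hA _ => hatIG_eq_zero_iff hA, fun B hB => genIGMeasure_one_eq_zero_iff hμ hB,
    fun p hp B hB => ⟨fun h => ?_, ?_⟩⟩
  · exact genIGMeasure_eq_zero_of_ae (zero_lt_one.trans_le hp).ne' hB
      ((genIGMeasure_one_eq_zero_iff hμ hB).1 h)
  · exact genIGMeasure_one_eq_zero_of_genIGMeasure_eq_zero hΛb.measure_lt_top.ne hμ hp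

/-- Proposition 4.5: characterization of null sets of `𝓘̂_m`,
`𝓘^m_1` and `𝓘^m_p`. -/
theorem genIGMeasure_null_iff
    {n l : ℕ} (hn : 1 ≤ n)
    (Λ : Set (Euc l)) (hΛo : IsOpen Λ) (hΛb : Bornology.IsBounded Λ)
    (μ : Euc l → Measure (Euc n)) (hμ : MeasurableFamily Λ μ) :
    (∀ A : Set (Euc n × Euc l), MeasurableSet A → A ⊆ Set.univ ×ˢ Λ →
      (hatIG Λ μ A = 0 ↔
        ∀ᵐ lam ∂(volume.restrict Λ), μ lam {x | (x, lam) ∈ A} = 0)) ∧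
    (∀ B : Set (Euc n), MeasurableSet B →
      (genIGMeasure Λ μ 1 B = 0 ↔ ∀ᵐ lam ∂(volume.restrict Λ), μ lam B = 0)) ∧
    (∀ p : ℝ≥0∞, 1 ≤ p → ∀ B : Set (Euc n), MeasurableSet B →
      (genIGMeasure Λ μ 1 B = 0 ↔ genIGMeasure Λ μ p B = 0)) :=
  genIGMeasure_null_iff_general Λ hΛb μ hμ

end Slicing
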